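/- Lemma (vertex-transitivity and vertex stabilizers of the wreath product). The group {θ_{σ,φ} : σ ∈ ∏_{i∈V} Equiv.Perm N, φ ∈ Aut(𝒦)} acts transitively on the vertex set V → N of the power complex n^𝒦. Moreover, for a fixed a ∈ N, the stabilizer of the constant function ā (with value a) in the wreath product (∏_{i∈V} Equiv.Perm N) ⋊ Aut(𝒦), acting via (σ,φ) ↦ θ_{σ,φ}, equals the subgroup {(σ, φ) : σ_i(a) = a for all i ∈ V}, and this subgroup is isomorphic to the wreath product S_{n−1} ≀ Aut(𝒦) := (∏_{i∈V} Equiv.Perm {x : N // x ≠ a}) ⋊ Aut(𝒦). -/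

import Mathlib

/-- The face `F(ε)` of the power complex. -/
def face (n v : ℕ) (F : Set (Fin v)) (ε : Fin v → Fin n) : Set (Fin v → Fin n) :=
  {η | ∀ i ∉ F, η i = ε i}

/-- The power complex `n^𝒦`, as a family of subsets of `V → N`. -/
def powerComplex (n v : ℕ) (𝒦 : Set (Set (Fin v))) : Set (Set (Fin v → Fin n)) :=
  {A | ∃ F ∈ 𝒦, ∃ ε : Fin v → Fin n, A = face n v F ε}

/-- The automorphism group `Aut(𝒦)` of the complex `𝒦`: all permutations `φ` of the vertex
set such that `F ∈ 𝒦 ↔ φ(F) ∈ 𝒦` for every subset `F`. -/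
def AutK (v : ℕ) (𝒦 : Set (Set (Fin v))) : Subgroup (Equiv.Perm (Fin v)) where
  carrier := {φ | ∀ F : Set (Fin v), F ∈ 𝒦 ↔ φ '' F ∈ 𝒦}
  one_mem' := by intro F; simp
  mul_mem' := by
    intro φ ψ hφ hψ F
    have h : ⇑(φ * ψ) '' F = φ '' (ψ '' F) := by
      rw [← Set.image_comp]; rfl
    rw [h]
    exact (hψ F).trans (hφ (ψ '' F))
  inv_mem' := by
    intro φ hφ F
    have h := hφ (⇑(φ⁻¹) '' F)
    have h2 : ⇑φ '' (⇑(φ⁻¹) '' F) = F := by ext x; simp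
    rw [h2] at h
    exact h.symm

/-- The permutation `θ_{σ,φ}` of `V → N`, `θ_{σ,φ}(η) i = σ_{φ⁻¹ i}(η (φ⁻¹ i))`. -/
def theta {n v : ℕ} (σ : Fin v → Equiv.Perm (Fin n)) (φ : Equiv.Perm (Fin v)) :
    Equiv.Perm (Fin v → Fin n) where
  toFun η i := σ (φ⁻¹ i) (η (φ⁻¹ i))
  invFun η i := (σ i)⁻¹ (η (φ i))
  left_inv η := by funext i; simp
  right_inv η := by funext i; simp

/-- The coordinate-permuting action on a direct power of a group: `(φ·σ)_i = σ_{φ⁻¹ i}`. -/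
def permPi (v : ℕ) (G : Type*) [Group G] : Equiv.Perm (Fin v) →* MulAut (Fin v → G) where
  toFun φ :=
    { toFun := fun σ i => σ (φ⁻¹ i)
      invFun := fun σ i => σ (φ i)
      left_inv := fun σ => by funext i; simp
      right_inv := fun σ => by funext i; simp
      map_mul' := fun σ τ => rfl }
  map_one' := by ext σ i; simp
  map_mul' := fun φ ψ => by ext σ i; simp [mul_inv_rev]

/-- The wreath product `S_n ≀ Aut(𝒦) = (∏_{i ∈ V} S_n) ⋊ Aut(𝒦)`. -/
abbrev Wreath (n v : ℕ) (𝒦 : Set (Set (Fin v))) :=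
  (Fin v → Equiv.Perm (Fin n)) ⋊[(permPi v (Equiv.Perm (Fin n))).comp (AutK v 𝒦).subtype]
    (AutK v 𝒦)

/-- The subgroup of the wreath product consisting of the pairs `(σ, φ)` with `σ_i(a) = a`
for all `i` (the stabilizer of the base vertex, the constant function with value `a`). -/
def vertexStab (n v : ℕ) (𝒦 : Set (Set (Fin v))) (a : Fin n) : Subgroup (Wreath n v 𝒦) where
  carrier := {p | ∀ i, p.left i a = a}
  one_mem' := by intro i; simp [SemidirectProduct.one_left]
  mul_mem' := by
    intro p q hp hq i
    have h : (p * q).left i = p.left i * q.left ((p.right : Equiv.Perm (Fin v))⁻¹ i) := rfl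
    rw [h, Equiv.Perm.mul_apply, hq _, hp i]
  inv_mem' := by
    intro p hp i
    have h : (p⁻¹).left i = (p.left ((p.right : Equiv.Perm (Fin v)) i))⁻¹ := rfl
    rw [h]
    have := hp ((p.right : Equiv.Perm (Fin v)) i)
    exact (Equiv.Perm.inv_eq_iff_eq).mpr this.symm

/-! Taking `φ = 1` and `σ i = swap (ε i) (η i)` moves `ε` to `η`. Since `θ_{σ,φ}` permutes the
coordinates, it fixes the constant vertex `ā` exactly when every `σ i` fixes `a`. Extending
permutations of `N ∖ {a}` by the fixed point `a` is an injective homomorphism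
`Perm {x // x ≠ a} →* Perm N` with image the stabilizer of `a`; applied coordinatewise it induces an
injective homomorphism of wreath products `S_{n-1} ≀ Aut(𝒦) →* S_n ≀ Aut(𝒦)` whose image is
`vertexStab`. -/

open Equiv Function

section Theta

variable {n v : ℕ}

@[simp]
theorem theta_apply (σ : Fin v → Perm (Fin n)) (φ : Perm (Fin v)) (η : Fin v → Fin n)
    (i : Fin v) :
    theta σ φ η i = σ (φ⁻¹ i) (η (φ⁻¹ i)) :=
  rfl

theorem theta_swap_one (ε η : Fin v → Fin n) : theta (fun i => swap (ε i) (η i)) 1 ε = η := by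
  funext i
  simp

theorem theta_const_eq_const_iff (σ : Fin v → Perm (Fin n)) (φ : Perm (Fin v)) (a : Fin n) :
    theta σ φ (fun _ => a) = (fun _ => a) ↔ ∀ i, σ i a = a := by
  refine ⟨fun h i => by simpa using congrFun h (φ i), fun h => funext fun i => by simp [h]⟩

end Theta

namespace Equiv.Perm

theorem mem_range_ofSubtype_iff_forall {α : Type*} {p : α → Prop} [DecidablePred p]
    {g : Perm α} :
    g ∈ (ofSubtype : Perm (Subtype p) →* Perm α).range ↔ ∀ x, ¬p x → g x = x := by
  refine ⟨?_, fun hg => ?_⟩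
  · rintro ⟨k, rfl⟩ x hx
    exact ofSubtype_apply_of_not_mem k hx
  · have h := (Perm.subtypeEquivSubtypePerm p).apply_symm_apply ⟨g, hg⟩
    exact ⟨_, congrArg Subtype.val h⟩

end Equiv.Perm

section WreathMap

variable {v : ℕ} {G G' : Type*} [Group G] [Group G']

theorem compLeft_comp_permPi (f : G →* G') (φ : Perm (Fin v)) :
    (f.compLeft (Fin v)).comp (permPi v G φ).toMonoidHom =
      (permPi v G' φ).toMonoidHom.comp (f.compLeft (Fin v)) :=
  rfl

def wreathMap (f : G →* G') (H : Subgroup (Perm (Fin v))) :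
    (Fin v → G) ⋊[(permPi v G).comp H.subtype] H →*
      (Fin v → G') ⋊[(permPi v G').comp H.subtype] H :=
  SemidirectProduct.map (f.compLeft (Fin v)) (MonoidHom.id H) fun φ => compLeft_comp_permPi f φ.1

variable {f : G →* G'} {H : Subgroup (Perm (Fin v))}

@[simp]
theorem wreathMap_left (p : (Fin v → G) ⋊[(permPi v G).comp H.subtype] H) :
    (wreathMap f H p).left = f ∘ p.left :=
  rfl

@[simp]
theorem wreathMap_right (p : (Fin v → G) ⋊[(permPi v G).comp H.subtype] H) :
    (wreathMap f H p).right = p.right :=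
  rfl

theorem wreathMap_injective (hf : Injective f) : Injective (wreathMap f H) := by
  intro p q hpq
  refine SemidirectProduct.ext (funext fun i => hf ?_) ?_
  · simpa using congrFun (congrArg SemidirectProduct.left hpq) i
  · simpa using congrArg SemidirectProduct.right hpq

theorem mem_range_wreathMap_iff {p : (Fin v → G') ⋊[(permPi v G').comp H.subtype] H} :
    p ∈ (wreathMap f H).range ↔ ∀ i, p.left i ∈ f.range := by
  constructor
  · rintro ⟨q, rfl⟩ i
    exact ⟨q.left i, rfl⟩
  · intro hp
    choose σ hσ using hp
    exact ⟨⟨σ, p.right⟩, SemidirectProduct.ext (funext hσ) rfl⟩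

end WreathMap

theorem wreath_vertex_transitive_and_stabilizer_general (n v : ℕ)
    (𝒦 : Set (Set (Fin v))) (a : Fin n) :
    (∀ ε η : Fin v → Fin n, ∃ (σ : Fin v → Equiv.Perm (Fin n)) (φ : Equiv.Perm (Fin v)),
      φ ∈ AutK v 𝒦 ∧ theta σ φ ε = η) ∧
    (∀ p : Wreath n v 𝒦,
      theta p.left (p.right : Equiv.Perm (Fin v)) (fun _ => a) = (fun _ => a) ↔
        p ∈ vertexStab n v 𝒦 a) ∧
    Nonempty ((vertexStab n v 𝒦 a) ≃*
      ((Fin v → Equiv.Perm {x : Fin n // x ≠ a})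
        ⋊[(permPi v (Equiv.Perm {x : Fin n // x ≠ a})).comp (AutK v 𝒦).subtype]
        (AutK v 𝒦))) := by
  refine ⟨fun ε η => ⟨_, 1, (AutK v 𝒦).one_mem, theta_swap_one ε η⟩,
    fun p => theta_const_eq_const_iff _ _ a, ?_⟩
  have hrange :
      (wreathMap (Perm.ofSubtype (p := (· ≠ a))) (AutK v 𝒦)).range = vertexStab n v 𝒦 a := by
    ext p
    refine mem_range_wreathMap_iff.trans (forall_congr' fun i => ?_)
    exact Perm.mem_range_ofSubtype_iff_forall.trans (by simp)
  exact ⟨(MulEquiv.trans (MonoidHom.ofInjective (wreathMap_injective Perm.ofSubtype_injective))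
    (MulEquiv.subgroupCongr hrange)).symm⟩

/-- Lemma: vertex-transitivity and vertex stabilizers of the wreath product.  The group
`{θ_{σ,φ} : φ ∈ Aut(𝒦)}` is transitive on the vertex set `V → N` of `n^𝒦`; the stabilizer in
`S_n ≀ Aut(𝒦)` of the constant function `ā` is `{(σ,φ) : σ_i(a) = a for all i}`, and this
subgroup is isomorphic to the wreath product `S_{n−1} ≀ Aut(𝒦)`. -/
theorem wreath_vertex_transitive_and_stabilizer (n v : ℕ) (hn : 2 ≤ n) (hv : 1 ≤ v)
    (𝒦 : Set (Set (Fin v))) (a : Fin n) :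
    (∀ ε η : Fin v → Fin n, ∃ (σ : Fin v → Equiv.Perm (Fin n)) (φ : Equiv.Perm (Fin v)),
      φ ∈ AutK v 𝒦 ∧ theta σ φ ε = η) ∧
    (∀ p : Wreath n v 𝒦,
      theta p.left (p.right : Equiv.Perm (Fin v)) (fun _ => a) = (fun _ => a) ↔
        p ∈ vertexStab n v 𝒦 a) ∧
    Nonempty ((vertexStab n v 𝒦 a) ≃*
      ((Fin v → Equiv.Perm {x : Fin n // x ≠ a})
        ⋊[(permPi v (Equiv.Perm {x : Fin n // x ≠ a})).comp (AutK v 𝒦).subtype]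
        (AutK v 𝒦))) :=
  wreath_vertex_transitive_and_stabilizer_general n v 𝒦 a
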